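/- Let H be a complex Hilbert space and let M_1, M_2, N_1, N_2 be closed subspaces of H such that M_1 ⊥ M_2, M_1 ⊥ N_2, M_2 ⊥ N_1 and N_1 ⊥ N_2. Then c_e(M_1 ⊕ M_2, N_1 ⊕ N_2) = max( c_e(M_1, N_1), c_e(M_2, N_2) ), where M_1 ⊕ M_2 and N_1 ⊕ N_2 denote the (closed) sums of the respective orthogonal subspaces. -/

import Mathlib

/-- The orthogonal projection onto a subspace `K` of a complex inner product space,
as a bounded operator on the whole space (junk value `0` if `K` does not admit an
orthogonal projection; for a closed subspace of a Hilbert space it is the genuine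
orthogonal projection). -/
noncomputable def proj {H : Type*} [NormedAddCommGroup H] [InnerProductSpace ℂ H]
    (K : Submodule ℂ H) : H →L[ℂ] H :=
  letI := Classical.propDecidable (K.HasOrthogonalProjection)
  if h : K.HasOrthogonalProjection then
    haveI := h
    K.subtypeL.comp (K.orthogonalProjectionOnto)
  else 0

/-- The cosine of the essential Friedrichs angle between two (closed) subspaces `M`, `N`:
the infimum over compact operators `K` of `‖P_M P_N - P_{M ∩ N} + K‖`, i.e. the norm of
the class of `P_M P_N - P_{M ∩ N}` in the Calkin algebra. -/
noncomputable def essFriedrichs {H : Type*} [NormedAddCommGroup H] [InnerProductSpace ℂ H]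
    (M N : Submodule ℂ H) : ℝ :=
  ⨅ K : {T : H →L[ℂ] H // IsCompactOperator ⇑T},
    ‖proj M * proj N - proj (M ⊓ N) + (K : H →L[ℂ] H)‖

/-! Write `Tᵢ = P_{Mᵢ} P_{Nᵢ} - P_{Mᵢ ⊓ Nᵢ}`. The hypotheses give `(M₁ ⊔ N₁) ⟂ (M₂ ⊔ N₂)`, hence
`(M₁ ⊔ M₂) ⊓ (N₁ ⊔ N₂) = (M₁ ⊓ N₁) ⊔ (M₂ ⊓ N₂)`; as projections onto orthogonal sums add and the
cross terms `P_{M₁} P_{N₂}`, `P_{M₂} P_{N₁}` vanish, the operator of the pair of sums is `T₁ + T₂`,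
with `Tᵢ = P_{Mᵢ} Tᵢ P_{Nᵢ}`.

Compressing by `P_{M₁} (·) P_{N₁}` does not increase the essential norm and turns `T₁ + T₂` into
`T₁`, which gives `≥`. For `≤`, compress near-optimal perturbations `Tᵢ + Kᵢ` to
`Aᵢ = P_{Mᵢ} (Tᵢ + Kᵢ) P_{Nᵢ}`: these have orthogonal ranges and only see the orthogonal pieces
`P_{Nᵢ} x` of the input, so `‖A₁ + A₂‖ ≤ max ‖A₁‖ ‖A₂‖`, and `A₁ + A₂` is a compact perturbation
of `T₁ + T₂`. -/

open Submodule ContinuousLinearMap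

theorem Submodule.sup_inf_sup_eq_of_disjoint {R E : Type*} [Ring R] [AddCommGroup E] [Module R E]
    {M₁ M₂ N₁ N₂ : Submodule R E} (h : Disjoint (M₁ ⊔ N₁) (M₂ ⊔ N₂)) :
    (M₁ ⊔ M₂) ⊓ (N₁ ⊔ N₂) = M₁ ⊓ N₁ ⊔ M₂ ⊓ N₂ := by
  refine le_antisymm ?_
    (sup_le (inf_le_inf le_sup_left le_sup_left) (inf_le_inf le_sup_right le_sup_right))
  rintro x ⟨hxM, hxN⟩
  obtain ⟨m₁, hm₁, m₂, hm₂, rfl⟩ := mem_sup.1 hxM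
  obtain ⟨n₁, hn₁, n₂, hn₂, hn⟩ := mem_sup.1 hxN
  have hdiff : m₁ - n₁ = -(m₂ - n₂) := by linear_combination (norm := abel) -hn
  have h₁ : m₁ = n₁ := sub_eq_zero.1 <| disjoint_def.1 h _ (sub_mem_sup hm₁ hn₁)
    (hdiff ▸ neg_mem (sub_mem_sup hm₂ hn₂))
  have h₂ : m₂ = n₂ := by rw [h₁] at hn; exact (add_left_cancel hn).symm
  exact add_mem_sup ⟨hm₁, h₁ ▸ hn₁⟩ ⟨hm₂, h₂ ▸ hn₂⟩

theorem norm_mul_mul_le_of_norm_le_one {R : Type*} [SeminormedRing R] {a b : R}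
    (ha : ‖a‖ ≤ 1) (hb : ‖b‖ ≤ 1) (x : R) : ‖a * x * b‖ ≤ ‖x‖ :=
  calc ‖a * x * b‖ ≤ ‖a‖ * ‖x‖ * ‖b‖ := norm_mul₃_le
    _ ≤ 1 * ‖x‖ * 1 := by gcongr
    _ = ‖x‖ := by ring

namespace Submodule

variable {𝕜 E : Type*} [RCLike 𝕜] [NormedAddCommGroup E] [InnerProductSpace 𝕜 E]

theorem starProjection_comp_starProjection_of_ge {U V : Submodule 𝕜 E}
    [U.HasOrthogonalProjection] [V.HasOrthogonalProjection] (h : U ≤ V) :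
    V.starProjection ∘L U.starProjection = U.starProjection :=
  ContinuousLinearMap.ext fun x ↦ starProjection_eq_self_iff.2 (h (starProjection_apply_mem U x))

variable {U V : Submodule 𝕜 E} [U.HasOrthogonalProjection] [V.HasOrthogonalProjection]

theorem IsOrtho.sub_starProjection_add_mem_orthogonal (h : U ⟂ V) (v : E) :
    v - (U.starProjection v + V.starProjection v) ∈ (U ⊔ V)ᗮ := by
  rw [← inf_orthogonal]
  constructor
  · rw [← sub_sub]
    exact sub_mem (sub_starProjection_mem_orthogonal v) (h.ge (starProjection_apply_mem V v))
  · rw [add_comm, ← sub_sub]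
    exact sub_mem (sub_starProjection_mem_orthogonal v) (h.le (starProjection_apply_mem U v))

theorem IsOrtho.hasOrthogonalProjection_sup (h : U ⟂ V) : (U ⊔ V).HasOrthogonalProjection :=
  ⟨fun v ↦ ⟨_, add_mem_sup (starProjection_apply_mem U v) (starProjection_apply_mem V v),
    h.sub_starProjection_add_mem_orthogonal v⟩⟩

theorem IsOrtho.starProjection_sup [(U ⊔ V).HasOrthogonalProjection] (h : U ⟂ V) :
    (U ⊔ V).starProjection = U.starProjection + V.starProjection :=
  ContinuousLinearMap.ext fun v ↦ (eq_starProjection_of_mem_orthogonal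
    (add_mem_sup (starProjection_apply_mem U v) (starProjection_apply_mem V v))
    (h.sub_starProjection_add_mem_orthogonal v))

theorem IsOrtho.norm_sq_starProjection_add_norm_sq_le (h : U ⟂ V) (v : E) :
    ‖U.starProjection v‖ ^ 2 + ‖V.starProjection v‖ ^ 2 ≤ ‖v‖ ^ 2 := by
  have := h.hasOrthogonalProjection_sup
  calc ‖U.starProjection v‖ ^ 2 + ‖V.starProjection v‖ ^ 2
      = ‖U.starProjection v + V.starProjection v‖ ^ 2 := by
        simp only [sq]
        exact (norm_add_sq_eq_norm_sq_add_norm_sq_of_inner_eq_zero (𝕜 := 𝕜) _ _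
          (h.inner_eq (starProjection_apply_mem U v) (starProjection_apply_mem V v))).symm
    _ = ‖(U ⊔ V).starProjection v‖ ^ 2 := by rw [h.starProjection_sup, add_apply]
    _ ≤ ‖v‖ ^ 2 := by gcongr; exact norm_starProjection_apply_le _ v

theorem starProjection_mul_sub_mul_starProjection (M N : Submodule 𝕜 E)
    [M.HasOrthogonalProjection] [N.HasOrthogonalProjection] [(M ⊓ N).HasOrthogonalProjection] :
    M.starProjection * (M.starProjection * N.starProjection - (M ⊓ N).starProjection) *
        N.starProjection =
      M.starProjection * N.starProjection - (M ⊓ N).starProjection := by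
  rw [mul_sub, sub_mul, ← mul_assoc, (isIdempotentElem_starProjection (K := M)).eq, mul_assoc,
    (isIdempotentElem_starProjection (K := N)).eq,
    ContinuousLinearMap.mul_def M.starProjection (M ⊓ N).starProjection,
    starProjection_comp_starProjection_of_ge inf_le_left,
    ContinuousLinearMap.mul_def (M ⊓ N).starProjection N.starProjection,
    starProjection_comp_starProjection_of_le inf_le_right]

end Submodule

theorem norm_add_le_max_of_isOrtho {𝕜 E : Type*} [RCLike 𝕜] [NormedAddCommGroup E]
    [InnerProductSpace 𝕜 E] {U V : Submodule 𝕜 E} [U.HasOrthogonalProjection]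
    [V.HasOrthogonalProjection] (hUV : U ⟂ V) {A B : E →L[𝕜] E}
    (hAB : ∀ x y, inner 𝕜 (A x) (B y) = 0) (hA : A * U.starProjection = A)
    (hB : B * V.starProjection = B) :
    ‖A + B‖ ≤ max ‖A‖ ‖B‖ := by
  set m := max ‖A‖ ‖B‖
  have hm : 0 ≤ m := (norm_nonneg A).trans (le_max_left _ _)
  refine opNorm_le_bound _ hm fun x ↦ ?_
  have hAx : ‖A x‖ ≤ m * ‖U.starProjection x‖ := calc
    ‖A x‖ = ‖A (U.starProjection x)‖ := by rw [← DFunLike.congr_fun hA x]; rfl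
    _ ≤ ‖A‖ * ‖U.starProjection x‖ := le_opNorm _ _
    _ ≤ m * ‖U.starProjection x‖ := by gcongr; exact le_max_left _ _
  have hBx : ‖B x‖ ≤ m * ‖V.starProjection x‖ := calc
    ‖B x‖ = ‖B (V.starProjection x)‖ := by rw [← DFunLike.congr_fun hB x]; rfl
    _ ≤ ‖B‖ * ‖V.starProjection x‖ := le_opNorm _ _
    _ ≤ m * ‖V.starProjection x‖ := by gcongr; exact le_max_right _ _
  refine (sq_le_sq₀ (norm_nonneg _) (by positivity)).1 ?_
  calc ‖(A + B) x‖ ^ 2 = ‖A x‖ ^ 2 + ‖B x‖ ^ 2 := by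
        simp only [sq, add_apply]
        exact norm_add_sq_eq_norm_sq_add_norm_sq_of_inner_eq_zero _ _ (hAB x x)
    _ ≤ (m * ‖U.starProjection x‖) ^ 2 + (m * ‖V.starProjection x‖) ^ 2 := by gcongr
    _ = m ^ 2 * (‖U.starProjection x‖ ^ 2 + ‖V.starProjection x‖ ^ 2) := by ring
    _ ≤ m ^ 2 * ‖x‖ ^ 2 := by gcongr; exact hUV.norm_sq_starProjection_add_norm_sq_le x
    _ = (m * ‖x‖) ^ 2 := by ring

section EssNorm

variable {𝕜 E : Type*} [NontriviallyNormedField 𝕜] [NormedAddCommGroup E] [NormedSpace 𝕜 E]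

noncomputable def essNorm (T : E →L[𝕜] E) : ℝ :=
  ⨅ K : {K : E →L[𝕜] E // IsCompactOperator K}, ‖T + K‖

theorem essNorm_le_norm_add (T : E →L[𝕜] E) {K : E →L[𝕜] E} (hK : IsCompactOperator K) :
    essNorm T ≤ ‖T + K‖ :=
  ciInf_le (f := fun K : {K : E →L[𝕜] E // IsCompactOperator K} ↦ ‖T + K‖)
    ⟨0, by rintro _ ⟨K, rfl⟩; exact norm_nonneg _⟩ ⟨K, hK⟩

theorem le_essNorm {T : E →L[𝕜] E} {c : ℝ}
    (h : ∀ K : E →L[𝕜] E, IsCompactOperator K → c ≤ ‖T + K‖) : c ≤ essNorm T :=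
  haveI : Nonempty {K : E →L[𝕜] E // IsCompactOperator K} := ⟨⟨0, isCompactOperator_zero⟩⟩
  le_ciInf fun K ↦ h K K.2

theorem exists_norm_add_lt_of_essNorm_lt {T : E →L[𝕜] E} {c : ℝ} (h : essNorm T < c) :
    ∃ K : E →L[𝕜] E, IsCompactOperator K ∧ ‖T + K‖ < c :=
  haveI : Nonempty {K : E →L[𝕜] E // IsCompactOperator K} := ⟨⟨0, isCompactOperator_zero⟩⟩
  let ⟨K, hK⟩ := exists_lt_of_ciInf_lt h
  ⟨K, K.2, hK⟩

theorem IsCompactOperator.mul_mul {K : E →L[𝕜] E} (hK : IsCompactOperator K)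
    (A B : E →L[𝕜] E) : IsCompactOperator (A * K * B) :=
  (hK.comp_clm B).clm_comp A

theorem essNorm_mul_mul_le {A B : E →L[𝕜] E} (hA : ‖A‖ ≤ 1) (hB : ‖B‖ ≤ 1) (T : E →L[𝕜] E) :
    essNorm (A * T * B) ≤ essNorm T :=
  le_essNorm fun K hK ↦ calc
    essNorm (A * T * B) ≤ ‖A * T * B + A * K * B‖ := essNorm_le_norm_add _ (hK.mul_mul A B)
    _ = ‖A * (T + K) * B‖ := by rw [mul_add, add_mul]
    _ ≤ ‖T + K‖ := norm_mul_mul_le_of_norm_le_one hA hB _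

end EssNorm

section BlockDiagonal

variable {𝕜 E : Type*} [RCLike 𝕜] [NormedAddCommGroup E] [InnerProductSpace 𝕜 E]
  {M₁ M₂ N₁ N₂ : Submodule 𝕜 E} [M₁.HasOrthogonalProjection] [M₂.HasOrthogonalProjection]
  [N₁.HasOrthogonalProjection] [N₂.HasOrthogonalProjection] {T₁ T₂ : E →L[𝕜] E}

theorem essNorm_le_essNorm_add_of_isOrtho (hM : M₁ ⟂ M₂)
    (hT₁ : M₁.starProjection * T₁ * N₁.starProjection = T₁)
    (hT₂ : M₂.starProjection * T₂ * N₂.starProjection = T₂) :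
    essNorm T₁ ≤ essNorm (T₁ + T₂) := by
  have hcompress : M₁.starProjection * (T₁ + T₂) * N₁.starProjection = T₁ := by
    rw [mul_add, add_mul, hT₁, ← hT₂]
    simp only [← mul_assoc, mul_def M₁.starProjection M₂.starProjection,
      hM.starProjection_comp_starProjection, zero_mul, add_zero]
  calc essNorm T₁ = essNorm (M₁.starProjection * (T₁ + T₂) * N₁.starProjection) := by
        rw [hcompress]
    _ ≤ essNorm (T₁ + T₂) :=
        essNorm_mul_mul_le (starProjection_norm_le _) (starProjection_norm_le _) _

theorem essNorm_add_le_max_of_isOrtho (hM : M₁ ⟂ M₂) (hN : N₁ ⟂ N₂)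
    (hT₁ : M₁.starProjection * T₁ * N₁.starProjection = T₁)
    (hT₂ : M₂.starProjection * T₂ * N₂.starProjection = T₂) :
    essNorm (T₁ + T₂) ≤ max (essNorm T₁) (essNorm T₂) := by
  by_contra! hlt
  obtain ⟨K₁, hK₁, h₁⟩ := exists_norm_add_lt_of_essNorm_lt ((le_max_left _ _).trans_lt hlt)
  obtain ⟨K₂, hK₂, h₂⟩ := exists_norm_add_lt_of_essNorm_lt ((le_max_right _ _).trans_lt hlt)
  set A := M₁.starProjection * (T₁ + K₁) * N₁.starProjection
  set B := M₂.starProjection * (T₂ + K₂) * N₂.starProjection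
  have hsum : T₁ + T₂ + (M₁.starProjection * K₁ * N₁.starProjection +
      M₂.starProjection * K₂ * N₂.starProjection) = A + B := by
    nth_rewrite 1 [← hT₁, ← hT₂]
    simp only [A, B, mul_add, add_mul]
    abel
  have hAB : ∀ x y, inner 𝕜 (A x) (B y) = 0 := fun x y ↦
    hM.inner_eq (starProjection_apply_mem M₁ _) (starProjection_apply_mem M₂ _)
  have hA : A * N₁.starProjection = A := by
    rw [mul_assoc, (isIdempotentElem_starProjection (K := N₁)).eq]
  have hB : B * N₂.starProjection = B := by
    rw [mul_assoc, (isIdempotentElem_starProjection (K := N₂)).eq]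
  have := calc
    essNorm (T₁ + T₂) ≤ ‖A + B‖ :=
        hsum ▸ essNorm_le_norm_add _ ((hK₁.mul_mul _ _).add (hK₂.mul_mul _ _))
    _ ≤ max ‖A‖ ‖B‖ := norm_add_le_max_of_isOrtho hN hAB hA hB
    _ ≤ max ‖T₁ + K₁‖ ‖T₂ + K₂‖ :=
      max_le_max
        (norm_mul_mul_le_of_norm_le_one (starProjection_norm_le _) (starProjection_norm_le _) _)
        (norm_mul_mul_le_of_norm_le_one (starProjection_norm_le _) (starProjection_norm_le _) _)
    _ < essNorm (T₁ + T₂) := max_lt h₁ h₂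
  exact lt_irrefl _ this

theorem essNorm_add_eq_max_of_isOrtho (hM : M₁ ⟂ M₂) (hN : N₁ ⟂ N₂)
    (hT₁ : M₁.starProjection * T₁ * N₁.starProjection = T₁)
    (hT₂ : M₂.starProjection * T₂ * N₂.starProjection = T₂) :
    essNorm (T₁ + T₂) = max (essNorm T₁) (essNorm T₂) := by
  refine le_antisymm (essNorm_add_le_max_of_isOrtho hM hN hT₁ hT₂) (max_le ?_ ?_)
  · exact essNorm_le_essNorm_add_of_isOrtho hM hT₁ hT₂
  · rw [add_comm]
    exact essNorm_le_essNorm_add_of_isOrtho hM.symm hT₂ hT₁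

end BlockDiagonal

section Friedrichs

variable {H : Type*} [NormedAddCommGroup H] [InnerProductSpace ℂ H]

theorem proj_eq_starProjection (K : Submodule ℂ H) [K.HasOrthogonalProjection] :
    proj K = K.starProjection :=
  dif_pos ‹_›

variable {U V : Submodule ℂ H} [U.HasOrthogonalProjection] [V.HasOrthogonalProjection]

theorem proj_sup_of_isOrtho (h : U ⟂ V) : proj (U ⊔ V) = proj U + proj V := by
  have := h.hasOrthogonalProjection_sup
  rw [proj_eq_starProjection, proj_eq_starProjection, proj_eq_starProjection,
    h.starProjection_sup]

theorem proj_mul_proj_of_isOrtho (h : U ⟂ V) : proj U * proj V = 0 := by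
  rw [proj_eq_starProjection, proj_eq_starProjection]
  exact h.starProjection_comp_starProjection

theorem proj_sup_mul_proj_sup_sub_proj_inf {M₁ M₂ N₁ N₂ : Submodule ℂ H}
    [M₁.HasOrthogonalProjection] [M₂.HasOrthogonalProjection] [N₁.HasOrthogonalProjection]
    [N₂.HasOrthogonalProjection] [(M₁ ⊓ N₁).HasOrthogonalProjection]
    [(M₂ ⊓ N₂).HasOrthogonalProjection]
    (hMM : M₁ ⟂ M₂) (hMN : M₁ ⟂ N₂) (hNM : M₂ ⟂ N₁) (hNN : N₁ ⟂ N₂) :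
    proj (M₁ ⊔ M₂) * proj (N₁ ⊔ N₂) - proj ((M₁ ⊔ M₂) ⊓ (N₁ ⊔ N₂)) =
      (proj M₁ * proj N₁ - proj (M₁ ⊓ N₁)) + (proj M₂ * proj N₂ - proj (M₂ ⊓ N₂)) := by
  have hdisj : Disjoint (M₁ ⊔ N₁) (M₂ ⊔ N₂) :=
    (isOrtho_sup_left.2 ⟨isOrtho_sup_right.2 ⟨hMM, hMN⟩,
      isOrtho_sup_right.2 ⟨hNM.symm, hNN⟩⟩).disjoint
  rw [sup_inf_sup_eq_of_disjoint hdisj, proj_sup_of_isOrtho hMM, proj_sup_of_isOrtho hNN,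
    proj_sup_of_isOrtho (IsOrtho.mono inf_le_left inf_le_left hMM), add_mul, mul_add, mul_add,
    proj_mul_proj_of_isOrtho hMN, proj_mul_proj_of_isOrtho hNM]
  abel

end Friedrichs

theorem stmt12 {H : Type*} [NormedAddCommGroup H] [InnerProductSpace ℂ H] [CompleteSpace H]
    (M₁ M₂ N₁ N₂ : Submodule ℂ H)
    (hM₁ : IsClosed (M₁ : Set H)) (hM₂ : IsClosed (M₂ : Set H))
    (hN₁ : IsClosed (N₁ : Set H)) (hN₂ : IsClosed (N₂ : Set H))
    (hMM : ∀ x ∈ M₁, ∀ y ∈ M₂, (inner ℂ x y : ℂ) = 0)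
    (hMN : ∀ x ∈ M₁, ∀ y ∈ N₂, (inner ℂ x y : ℂ) = 0)
    (hNM : ∀ x ∈ M₂, ∀ y ∈ N₁, (inner ℂ x y : ℂ) = 0)
    (hNN : ∀ x ∈ N₁, ∀ y ∈ N₂, (inner ℂ x y : ℂ) = 0) :
    essFriedrichs (M₁ ⊔ M₂) (N₁ ⊔ N₂) =
      max (essFriedrichs M₁ N₁) (essFriedrichs M₂ N₂) := by
  have := hM₁.completeSpace_coe
  have := hM₂.completeSpace_coe
  have := hN₁.completeSpace_coe
  have := hN₂.completeSpace_coe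
  have := (hM₁.inter hN₁).completeSpace_coe
  have := (hM₂.inter hN₂).completeSpace_coe
  have hMM' : M₁ ⟂ M₂ := isOrtho_iff_inner_eq.2 hMM
  have hNN' : N₁ ⟂ N₂ := isOrtho_iff_inner_eq.2 hNN
  change essNorm _ = max (essNorm _) (essNorm _)
  rw [proj_sup_mul_proj_sup_sub_proj_inf hMM' (isOrtho_iff_inner_eq.2 hMN)
    (isOrtho_iff_inner_eq.2 hNM) hNN']
  simp only [proj_eq_starProjection]
  exact essNorm_add_eq_max_of_isOrtho hMM' hNN' (starProjection_mul_sub_mul_starProjection _ _)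
    (starProjection_mul_sub_mul_starProjection _ _)
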